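/- Let d, q > 0 and r₂, r₃ ≥ 0, and let A and B be as follows: A is the 3×3 matrix with rows [−2d−2q+r₁, d, d], [d+q, −d+r₂, 0], [d+q, 0, −d+r₃] (r₁ ≥ 0), and B is the 2×2 matrix with rows [−2d−2q+r₁, d], [2d+2q, −d+r₃]. Then: if r₂ = r₃ then s(A) = s(B); if r₂ > r₃ then s(A) > s(B); if r₂ < r₃ then s(A) < s(B). -/

import Mathlib

/-!
Write `a = -2d-2q+r₁`, `e = -d+r₃`, `w = r₃ - r₂`. Expanding the determinants gives
`p_A(λ) = (λ - (r₂ - d)) p_B(λ) + d(d+q) w`, where `p_B(λ) = (λ - a)(λ - e) - 2d(d+q)`.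
Since `2d(d+q) > 0`, `p_B` has a real root `s > max a e`, and `s(B) = s`. With
`u = s - a > 0`, `v = s - e > 0` (so `uv = 2d(d+q)`) and `λ = s + z`,
`p_B = z(z+u+v)` and `p_A = z(z+u+v)(z+v+w) + uvw/2`.
If `w = 0` the roots of `p_A` are `s`, `s-u-v`, `s-v`. If `w < 0` the constant term is negative,
so there is a root `z > 0`. If `w > 0` the cubic in `z` satisfies the Routh–Hurwitz condition
`a₂a₁ > a₀ > 0`, so every root has `Re z < 0`.
-/

open Matrix

/-- Spectral bound: maximum real part of the (complex) eigenvalues. -/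
noncomputable def specBound {n : ℕ} (M : Matrix (Fin n) (Fin n) ℝ) : ℝ :=
  sSup {t : ℝ | ∃ μ ∈ spectrum ℂ (M.map Complex.ofReal), μ.re = t}

section SpecBound

variable {n : ℕ} (M : Matrix (Fin n) (Fin n) ℝ)

theorem re_le_specBound {μ : ℂ} (hμ : μ ∈ spectrum ℂ (M.map Complex.ofReal)) :
    μ.re ≤ specBound M :=
  le_csSup ((Matrix.finite_spectrum _).image _).bddAbove (Set.mem_image_of_mem _ hμ)

theorem exists_mem_spectrum_re_eq_specBound [NeZero n] :
    ∃ μ ∈ spectrum ℂ (M.map Complex.ofReal), μ.re = specBound M :=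
  ((spectrum.nonempty_of_isAlgClosed_of_finiteDimensional ℂ _).image _).csSup_mem
    ((Matrix.finite_spectrum _).image _)

theorem specBound_le [NeZero n] {t : ℝ}
    (h : ∀ μ ∈ spectrum ℂ (M.map Complex.ofReal), μ.re ≤ t) : specBound M ≤ t := by
  obtain ⟨μ, hμ, hre⟩ := exists_mem_spectrum_re_eq_specBound M
  exact hre ▸ h μ hμ

theorem specBound_lt [NeZero n] {t : ℝ}
    (h : ∀ μ ∈ spectrum ℂ (M.map Complex.ofReal), μ.re < t) : specBound M < t := by
  obtain ⟨μ, hμ, hre⟩ := exists_mem_spectrum_re_eq_specBound M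
  exact hre ▸ h μ hμ

theorem specBound_eq_of_forall_re_le [NeZero n] {t : ℝ}
    (ht : (t : ℂ) ∈ spectrum ℂ (M.map Complex.ofReal))
    (h : ∀ μ ∈ spectrum ℂ (M.map Complex.ofReal), μ.re ≤ t) : specBound M = t :=
  (specBound_le M h).antisymm (by simpa using re_le_specBound M ht)

theorem mem_spectrum_map_ofReal_iff_det {μ : ℂ} :
    μ ∈ spectrum ℂ (M.map Complex.ofReal) ↔
      (algebraMap ℂ (Matrix (Fin n) (Fin n) ℂ) μ - M.map Complex.ofReal).det = 0 := by
  rw [spectrum.mem_iff, Matrix.isUnit_iff_isUnit_det, isUnit_iff_ne_zero, not_not]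

end SpecBound

theorem mem_spectrum_fin_two_iff (a b c e : ℝ) {μ : ℂ} :
    μ ∈ spectrum ℂ (!![a, b; c, e].map Complex.ofReal) ↔ (μ - a) * (μ - e) = b * c := by
  rw [mem_spectrum_map_ofReal_iff_det, ← sub_eq_zero (a := (μ - a) * _)]
  simp [Matrix.det_fin_two, Matrix.algebraMap_matrix_apply]

theorem mem_spectrum_arrowhead_iff (a b c e f g h : ℝ) {μ : ℂ} :
    μ ∈ spectrum ℂ (!![a, b, c; e, f, 0; g, 0, h].map Complex.ofReal) ↔
      (μ - a) * (μ - f) * (μ - h) = b * e * (μ - h) + c * g * (μ - f) := by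
  rw [mem_spectrum_map_ofReal_iff_det, ← sub_eq_zero (a := (μ - a) * _ * _)]
  simp [Matrix.det_fin_three, Matrix.algebraMap_matrix_apply]
  constructor <;> intro h <;> linear_combination h

theorem exists_pos_mul_eq_of_sub_eq (δ : ℝ) {k : ℝ} (hk : 0 < k) :
    ∃ u v : ℝ, 0 < u ∧ 0 < v ∧ u * v = k ∧ u - v = δ := by
  have hD : 0 < δ ^ 2 + 4 * k := by positivity
  have hlt : |δ| < √(δ ^ 2 + 4 * k) := by
    rw [← Real.sqrt_sq_eq_abs]
    exact Real.sqrt_lt_sqrt (sq_nonneg _) (by linarith)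
  refine ⟨(√(δ ^ 2 + 4 * k) + δ) / 2, (√(δ ^ 2 + 4 * k) - δ) / 2, ?_, ?_, ?_, by ring⟩
  · linarith [neg_abs_le δ]
  · linarith [le_abs_self δ]
  · linear_combination Real.sq_sqrt hD.le / 4

theorem exists_pos_mul_add_mul_add_eq (α β : ℝ) {K : ℝ} (hK : 0 < K) :
    ∃ x > 0, x * (x + α) * (x + β) = K := by
  set f : ℝ → ℝ := fun x => x * (x + α) * (x + β)
  set T := 1 + K + |α| + |β|
  have h₁ : 1 + K ≤ T := by linarith [abs_nonneg α, abs_nonneg β]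
  have h₂ : 1 + K ≤ T + α := by linarith [abs_nonneg β, neg_abs_le α]
  have h₃ : 1 + K ≤ T + β := by linarith [abs_nonneg α, neg_abs_le β]
  have hT : K ≤ f T := by
    have := mul_le_mul (mul_le_mul h₁ h₂ (by linarith) (by linarith)) h₃ (by linarith)
      (mul_nonneg (by linarith) (by linarith))
    nlinarith
  obtain ⟨x, hx, hfx⟩ := intermediate_value_Icc (by linarith : (0 : ℝ) ≤ T)
    (by fun_prop : Continuous f).continuousOn ⟨by simp [f, hK.le], hT⟩
  refine ⟨x, hx.1.lt_of_ne ?_, hfx⟩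
  rintro rfl
  simp [f] at hfx
  linarith

/-- Routh–Hurwitz for cubics, sufficiency direction. -/
theorem Complex.re_neg_of_cubic_eq_zero {a₂ a₁ a₀ : ℝ} (h₂ : 0 ≤ a₂) (h₁ : 0 ≤ a₁)
    (h₀ : 0 < a₀) (hRH : a₀ < a₂ * a₁) {z : ℂ} (hz : z ^ 3 + a₂ * z ^ 2 + a₁ * z + a₀ = 0) :
    z.re < 0 := by
  obtain ⟨x, y⟩ := z
  have hre := congrArg Complex.re hz
  have him := congrArg Complex.im hz
  simp [pow_succ] at hre him
  by_contra! hx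
  change 0 ≤ x at hx
  have hx₃ := mul_nonneg (mul_nonneg hx hx) hx
  rcases eq_or_ne y 0 with rfl | hy
  · nlinarith [mul_nonneg h₂ (mul_nonneg hx hx), mul_nonneg h₁ hx]
  · have hy2 : y ^ 2 = 3 * x ^ 2 + 2 * a₂ * x + a₁ :=
      mul_left_cancel₀ hy (by linear_combination -him)
    have : 8 * x ^ 3 + 8 * a₂ * x ^ 2 + (2 * a₁ + 2 * a₂ ^ 2) * x + (a₂ * a₁ - a₀) = 0 := by
      linear_combination -hre - (3 * x + a₂) * hy2
    nlinarith [mul_nonneg h₂ (mul_nonneg hx hx), mul_nonneg h₁ hx, mul_nonneg (sq_nonneg a₂) hx]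

def distributaryMatrix (d q r₁ r₂ r₃ : ℝ) : Matrix (Fin 3) (Fin 3) ℝ :=
  !![-2 * d - 2 * q + r₁, d, d;
     d + q, -d + r₂, 0;
     d + q, 0, -d + r₃]

def limitingMatrix (d q r₁ r₃ : ℝ) : Matrix (Fin 2) (Fin 2) ℝ :=
  !![-2 * d - 2 * q + r₁, d; 2 * d + 2 * q, -d + r₃]

section Distributary

variable {d q r₁ r₂ r₃ s u v : ℝ}

theorem mem_spectrum_limitingMatrix_iff (hsu : s - u = -2 * d - 2 * q + r₁)
    (hsv : s - v = -d + r₃) (huv : u * v = d * (2 * d + 2 * q)) {μ : ℂ} :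
    μ ∈ spectrum ℂ ((limitingMatrix d q r₁ r₃).map Complex.ofReal) ↔
      (μ - s) * (μ - s + (u + v)) = 0 := by
  rw [limitingMatrix, mem_spectrum_fin_two_iff, ← hsu, ← hsv, ← sub_eq_zero]
  push_cast
  rw [show (d : ℂ) * (2 * d + 2 * q) = u * v by exact_mod_cast huv.symm]
  ring_nf

theorem mem_spectrum_distributaryMatrix_iff (hsu : s - u = -2 * d - 2 * q + r₁)
    (hsv : s - v = -d + r₃) (huv : u * v = d * (2 * d + 2 * q)) {μ : ℂ} :
    μ ∈ spectrum ℂ ((distributaryMatrix d q r₁ r₂ r₃).map Complex.ofReal) ↔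
      (μ - s) * (μ - s + (u + v)) * (μ - s + (v + (r₃ - r₂))) + u * v * (r₃ - r₂) / 2 = 0 := by
  obtain rfl : r₁ = s - u + 2 * d + 2 * q := by linarith
  obtain rfl : r₃ = s - v + d := by linarith
  have huv' : (u : ℂ) * v = d * (2 * d + 2 * q) := by exact_mod_cast huv
  rw [distributaryMatrix, mem_spectrum_arrowhead_iff, ← sub_eq_zero]
  push_cast
  constructor <;> intro h
  · linear_combination h - (μ - (s - v - d + r₂) / 2) * huv'
  · linear_combination h + (μ - (s - v - d + r₂) / 2) * huv'

theorem specBound_limitingMatrix (hu : 0 < u) (hv : 0 < v) (hsu : s - u = -2 * d - 2 * q + r₁)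
    (hsv : s - v = -d + r₃) (huv : u * v = d * (2 * d + 2 * q)) :
    specBound (limitingMatrix d q r₁ r₃) = s := by
  have hB := @mem_spectrum_limitingMatrix_iff d q r₁ r₃ s u v hsu hsv huv
  refine specBound_eq_of_forall_re_le _ (hB.2 (by simp)) fun μ hμ => ?_
  rcases mul_eq_zero.1 (hB.1 hμ) with h | h <;> have := congrArg Complex.re h <;>
    simp at this <;> linarith

theorem specBound_distributaryMatrix_of_eq (hu : 0 < u) (hv : 0 < v)
    (hsu : s - u = -2 * d - 2 * q + r₁) (hsv : s - v = -d + r₃)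
    (huv : u * v = d * (2 * d + 2 * q)) :
    specBound (distributaryMatrix d q r₁ r₃ r₃) = s := by
  have hA := @mem_spectrum_distributaryMatrix_iff d q r₁ r₃ r₃ s u v hsu hsv huv
  refine specBound_eq_of_forall_re_le _ (hA.2 (by simp)) fun μ hμ => ?_
  have h := hA.1 hμ
  simp only [sub_self, mul_zero, zero_div, add_zero, mul_eq_zero] at h
  rcases h with (h | h) | h <;> have := congrArg Complex.re h <;> simp at this <;> linarith

theorem lt_specBound_distributaryMatrix (hr : r₃ < r₂) (hu : 0 < u) (hv : 0 < v)
    (hsu : s - u = -2 * d - 2 * q + r₁) (hsv : s - v = -d + r₃)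
    (huv : u * v = d * (2 * d + 2 * q)) :
    s < specBound (distributaryMatrix d q r₁ r₂ r₃) := by
  obtain ⟨x, hx, hroot⟩ := exists_pos_mul_add_mul_add_eq (u + v) (v + (r₃ - r₂))
    (K := u * v * (r₂ - r₃) / 2) (by have := sub_pos.2 hr; positivity)
  have hroot' := congrArg Complex.ofReal hroot
  push_cast at hroot'
  have hA := @mem_spectrum_distributaryMatrix_iff d q r₁ r₂ r₃ s u v hsu hsv huv (s + x)
  refine (lt_add_of_pos_right s hx).trans_le ?_
  simpa using re_le_specBound _ (hA.2 (by linear_combination hroot'))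

theorem specBound_distributaryMatrix_lt (hr : r₂ < r₃) (hu : 0 < u) (hv : 0 < v)
    (hsu : s - u = -2 * d - 2 * q + r₁) (hsv : s - v = -d + r₃)
    (huv : u * v = d * (2 * d + 2 * q)) :
    specBound (distributaryMatrix d q r₁ r₂ r₃) < s := by
  have hw := sub_pos.2 hr
  have hRH : u * v * (r₃ - r₂) ≤ (u + 2 * v + (r₃ - r₂)) * (u + v) * (v + (r₃ - r₂)) := by
    gcongr <;> linarith
  refine specBound_lt _ fun μ hμ => ?_
  have := Complex.re_neg_of_cubic_eq_zero (a₂ := u + 2 * v + (r₃ - r₂))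
    (a₁ := (u + v) * (v + (r₃ - r₂))) (a₀ := u * v * (r₃ - r₂) / 2) (by linarith)
    (by positivity) (by positivity) (by linarith [mul_pos (mul_pos hu hv) hw]) (z := μ - s)
    (by push_cast; linear_combination (mem_spectrum_distributaryMatrix_iff hsu hsv huv).1 hμ)
  simpa using this

end Distributary

theorem specBound_distributary_trichotomy_general (d q r₁ r₂ r₃ : ℝ) (hd : 0 < d)
    (hq : 0 < q) :
    (r₂ = r₃ →
      specBound !![-2 * d - 2 * q + r₁, d, d;
                   d + q, -d + r₂, 0;
                   d + q, 0, -d + r₃] =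
        specBound !![-2 * d - 2 * q + r₁, d; 2 * d + 2 * q, -d + r₃]) ∧
    (r₃ < r₂ →
      specBound !![-2 * d - 2 * q + r₁, d; 2 * d + 2 * q, -d + r₃] <
        specBound !![-2 * d - 2 * q + r₁, d, d;
                     d + q, -d + r₂, 0;
                     d + q, 0, -d + r₃]) ∧
    (r₂ < r₃ →
      specBound !![-2 * d - 2 * q + r₁, d, d;
                   d + q, -d + r₂, 0;
                   d + q, 0, -d + r₃] <
        specBound !![-2 * d - 2 * q + r₁, d; 2 * d + 2 * q, -d + r₃]) := by
  obtain ⟨u, v, hu, hv, huv, hsub⟩ := exists_pos_mul_eq_of_sub_eq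
    ((-d + r₃) - (-2 * d - 2 * q + r₁)) (k := d * (2 * d + 2 * q)) (by positivity)
  have hsu : (-2 * d - 2 * q + r₁ + u) - u = -2 * d - 2 * q + r₁ := by ring
  have hsv : (-2 * d - 2 * q + r₁ + u) - v = -d + r₃ := by linarith
  have hB := specBound_limitingMatrix hu hv hsu hsv huv
  refine ⟨fun hr => ?_, fun hr => ?_, fun hr => ?_⟩
  · subst hr
    exact hB ▸ specBound_distributaryMatrix_of_eq hu hv hsu hsv huv
  · exact hB ▸ lt_specBound_distributaryMatrix hr hu hv hsu hsv huv
  · exact hB ▸ specBound_distributaryMatrix_lt hr hu hv hsu hsv huv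

/-- Trichotomy comparing the spectral bounds of the distributary
matrix A and its limiting matrix B according to the sign of `r₂ − r₃`. -/
theorem specBound_distributary_trichotomy (d q r₁ r₂ r₃ : ℝ) (hd : 0 < d)
    (hq : 0 < q) (hr₁ : 0 ≤ r₁) (hr₂ : 0 ≤ r₂) (hr₃ : 0 ≤ r₃) :
    (r₂ = r₃ →
      specBound !![-2 * d - 2 * q + r₁, d, d;
                   d + q, -d + r₂, 0;
                   d + q, 0, -d + r₃] =
        specBound !![-2 * d - 2 * q + r₁, d; 2 * d + 2 * q, -d + r₃]) ∧
    (r₃ < r₂ →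
      specBound !![-2 * d - 2 * q + r₁, d; 2 * d + 2 * q, -d + r₃] <
        specBound !![-2 * d - 2 * q + r₁, d, d;
                     d + q, -d + r₂, 0;
                     d + q, 0, -d + r₃]) ∧
    (r₂ < r₃ →
      specBound !![-2 * d - 2 * q + r₁, d, d;
                   d + q, -d + r₂, 0;
                   d + q, 0, -d + r₃] <
        specBound !![-2 * d - 2 * q + r₁, d; 2 * d + 2 * q, -d + r₃]) :=
  specBound_distributary_trichotomy_general d q r₁ r₂ r₃ hd hq
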